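/- In A = K[t, t⁻¹, (t−1)⁻¹] with t' = 1 − t⁻¹ and t'' = (1−t)⁻¹, the relation ⟨t,t⁻¹⟩ + ⟨t',(t')⁻¹⟩ + ⟨t'',(t'')⁻¹⟩ = 0 holds in ⟨A,A⟩ = (A⊗A)/S. -/

import Mathlib

/-!
Writing `x⁻¹ = -(y z)` whenever `x y z = -1`, antisymmetry turns
`⟨x, x⁻¹⟩ + ⟨y, y⁻¹⟩ + ⟨z, z⁻¹⟩` into `⟨y z, x⟩ + ⟨z x, y⟩ + ⟨x y, z⟩`, a cyclic relation.
The theorem is the case `(x, y, z) = (t, t', t'')`, for which `t t' = t - 1` gives `t t' t'' = -1`.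
-/

open TensorProduct Polynomial

noncomputable section

/-- `A = K[t, t⁻¹, (t-1)⁻¹]`, the localization of `K[t]` at `t` and `t - 1`. -/
abbrev LoopAlgCoeff (K : Type*) [Field K] :=
  Localization (Submonoid.closure {(X : K[X]), X - 1})

/-- The element `t` of `A`. -/
def tElt (K : Type*) [Field K] : LoopAlgCoeff K :=
  algebraMap K[X] (LoopAlgCoeff K) X

/-- The subspace `S ⊆ A ⊗ A` spanned by all `a⊗b + b⊗a` and `ab⊗c + bc⊗a + ca⊗b`. -/
def cycRel (K : Type*) [Field K] (A : Type*) [CommRing A] [Algebra K A] :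
    Submodule K (A ⊗[K] A) :=
  Submodule.span K
    ({x | ∃ a b : A, x = a ⊗ₜ b + b ⊗ₜ a} ∪
     {x | ∃ a b c : A, x = (a*b) ⊗ₜ c + (b*c) ⊗ₜ a + (c*a) ⊗ₜ b})

/-- `⟨A,A⟩ = (A ⊗ A)/S`. -/
abbrev CycPair (K : Type*) [Field K] (A : Type*) [CommRing A] [Algebra K A] :=
  (A ⊗[K] A) ⧸ cycRel K A

/-- `⟨a,b⟩`, the class of `a ⊗ b` in `⟨A,A⟩`. -/
def cycPair (K : Type*) [Field K] {A : Type*} [CommRing A] [Algebra K A] (a b : A) :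
    CycPair K A := Submodule.Quotient.mk (a ⊗ₜ b)

section

variable {K : Type*} [Field K] {A : Type*} [CommRing A] [Algebra K A]

theorem cycPair_add_swap (a b : A) : cycPair K a b + cycPair K b a = 0 := by
  rw [cycPair, cycPair, ← Submodule.Quotient.mk_add, Submodule.Quotient.mk_eq_zero]
  exact Submodule.subset_span (Or.inl ⟨a, b, rfl⟩)

theorem cycPair_mul_add_mul_add_mul (a b c : A) :
    cycPair K (a * b) c + cycPair K (b * c) a + cycPair K (c * a) b = 0 := by
  rw [cycPair, cycPair, cycPair, ← Submodule.Quotient.mk_add, ← Submodule.Quotient.mk_add,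
    Submodule.Quotient.mk_eq_zero]
  exact Submodule.subset_span (Or.inr ⟨a, b, c, rfl⟩)

theorem cycPair_neg_right (a b : A) : cycPair K a (-b) = -cycPair K a b := by
  rw [cycPair, cycPair, tmul_neg, Submodule.Quotient.mk_neg]

theorem cycPair_inverse_eq_cycPair_of_mul_eq_neg_one {x y z : A} (h : x * y * z = -1) :
    cycPair K x (Ring.inverse x) = cycPair K (y * z) x := by
  have hx : x * -(y * z) = 1 := by linear_combination -h
  have hinv : Ring.inverse x = -(y * z) := by
    simpa [hx] using Ring.inverse_mul_cancel_left x (-(y * z)) (.of_mul_eq_one _ hx)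
  rw [hinv, cycPair_neg_right, neg_eq_iff_add_eq_zero, add_comm, cycPair_add_swap]

theorem cycPair_inverse_add_add_eq_zero {x y z : A} (h : x * y * z = -1) :
    cycPair K x (Ring.inverse x) + cycPair K y (Ring.inverse y) +
      cycPair K z (Ring.inverse z) = 0 := by
  rw [cycPair_inverse_eq_cycPair_of_mul_eq_neg_one h,
    cycPair_inverse_eq_cycPair_of_mul_eq_neg_one (x := y) (y := z) (z := x)
      (by linear_combination h),
    cycPair_inverse_eq_cycPair_of_mul_eq_neg_one (x := z) (y := x) (z := y)
      (by linear_combination h)]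
  exact cycPair_mul_add_mul_add_mul (K := K) y z x

end

theorem Ring.mul_one_sub_inverse_mul_inverse_one_sub {R : Type*} [CommRing R] {t : R}
    (ht : IsUnit t) (h1t : IsUnit (1 - t)) :
    t * (1 - Ring.inverse t) * Ring.inverse (1 - t) = -1 := by
  linear_combination (-Ring.inverse (1 - t)) * Ring.mul_inverse_cancel t ht -
    Ring.mul_inverse_cancel _ h1t

theorem isUnit_tElt (K : Type*) [Field K] : IsUnit (tElt K) :=
  IsLocalization.map_units (LoopAlgCoeff K) (⟨X, Submonoid.subset_closure (by simp)⟩ :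
    Submonoid.closure {(X : K[X]), X - 1})

theorem isUnit_one_sub_tElt (K : Type*) [Field K] : IsUnit (1 - tElt K) := by
  have h : IsUnit (algebraMap K[X] (LoopAlgCoeff K) (X - 1)) :=
    IsLocalization.map_units (LoopAlgCoeff K)
      (⟨X - 1, Submonoid.subset_closure (by simp)⟩ : Submonoid.closure {(X : K[X]), X - 1})
  rw [map_sub, map_one] at h
  simpa [tElt] using h.neg

theorem cycPair_sum_zero_general (K : Type*) [Field K] :
    let t : LoopAlgCoeff K := tElt K
    let t' : LoopAlgCoeff K := 1 - Ring.inverse t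
    let t'' : LoopAlgCoeff K := Ring.inverse (1 - t)
    cycPair K t (Ring.inverse t) + cycPair K t' (Ring.inverse t') +
      cycPair K t'' (Ring.inverse t'') = 0 :=
  cycPair_inverse_add_add_eq_zero
    (Ring.mul_one_sub_inverse_mul_inverse_one_sub (isUnit_tElt K) (isUnit_one_sub_tElt K))

/-- In `A = K[t, t⁻¹, (t-1)⁻¹]` with `t' = 1 - t⁻¹` and `t'' = (1-t)⁻¹`, the relation
`⟨t,t⁻¹⟩ + ⟨t',(t')⁻¹⟩ + ⟨t'',(t'')⁻¹⟩ = 0` holds in `⟨A,A⟩ = (A⊗A)/S`. -/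
theorem cycPair_sum_zero (K : Type*) [Field K] [CharZero K] :
    let t : LoopAlgCoeff K := tElt K
    let t' : LoopAlgCoeff K := 1 - Ring.inverse t
    let t'' : LoopAlgCoeff K := Ring.inverse (1 - t)
    cycPair K t (Ring.inverse t) + cycPair K t' (Ring.inverse t') +
      cycPair K t'' (Ring.inverse t'') = 0 :=
  cycPair_sum_zero_general K
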